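/- Let G be a graph, and let each vertex v be given two disjoint color sets L'(v) and R(v). Let φ be an edge coloring of G such that every color class has maximum degree at most 2 and such that φ(e) ∈ L'(u) ∩ L'(v) for each edge e = uv. Let H be a subgraph of G that contains at least one edge from every monochromatic cycle of φ, and let φ' be a proper edge coloring of H with φ'(e) ∈ R(u) ∩ R(v) for each edge e = uv of H. Define ψ on E(G) by ψ(e) = φ'(e) if e ∈ E(H) and ψ(e) = φ(e) otherwise. Then every color class of ψ induces a linear forest (i.e., ψ has no monochromatic cycle and every color class has maximum degree at most 2). -/

import Mathlib

/-!
At a vertex `v`, the edges of `H` receive `ψ`-colors from `R v` and the other edges of `G`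
colors from `L' v`; these lists are disjoint and `ψ` is proper on `H`. Hence two distinct edges
at a common vertex with the same `ψ`-color both lie outside `H`, where `ψ = φ`. Every edge of a
`ψ`-monochromatic cycle has such a partner, so the cycle avoids `H` and is `φ`-monochromatic,
contradicting that `H` hits it. Likewise a `ψ`-color class at `v` with two edges is contained in
a `φ`-color class, which has at most two edges at `v`.
-/

namespace SimpleGraph.Walk

variable {V : Type*} {G : SimpleGraph V}

theorem IsCycle.exists_ne_mem_edges_of_mem {u v : V} {p : G.Walk u u} (hp : p.IsCycle)
    {e : Sym2 V} (he : e ∈ p.edges) (hv : v ∈ e) : ∃ f ∈ p.edges, f ≠ e ∧ v ∈ f := by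
  classical
  have hvp : v ∈ p.support := by
    induction e using Sym2.inductionOn with
    | _ x y =>
      rcases Sym2.mem_iff.mp hv with rfl | rfl
      exacts [p.fst_mem_support_of_mem_edges he, p.snd_mem_support_of_mem_edges he]
  -- rotated to start at `v`, the cycle has distinct first and last edges, both at `v`
  set q := p.rotate v hvp
  have hq : q.IsCycle := hp.rotate hvp
  have hqp : ∀ f, f ∈ q.edges → f ∈ p.edges := fun f => (p.rotate_edges v hvp).mem_iff.mp
  have hfirst := hqp _ (q.mk_start_snd_mem_edges hq.not_nil)
  have hlast := hqp _ (q.mk_penultimate_end_mem_edges hq.not_nil)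
  have hne : s(v, q.snd) ≠ s(q.penultimate, v) := by
    rw [Sym2.eq_swap, Ne, Sym2.congr_left]
    exact hq.snd_ne_penultimate
  by_cases hfirst_e : s(v, q.snd) = e
  · exact ⟨_, hlast, hfirst_e ▸ hne.symm, Sym2.mem_mk_right _ _⟩
  · exact ⟨_, hfirst, hfirst_e, Sym2.mem_mk_left _ _⟩

end SimpleGraph.Walk

section CombinedColoring

variable {V : Type*} {G H : SimpleGraph V} {L' R : V → Set ℕ} {φ ψ : Sym2 V → ℕ}

theorem notMem_edgeSet_of_color_eq (hdisj : ∀ v : V, Disjoint (L' v) (R v))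
    (hψR : ∀ e ∈ H.edgeSet, ∀ v ∈ e, ψ e ∈ R v)
    (hψL' : ∀ e ∈ G.edgeSet, e ∉ H.edgeSet → ∀ v ∈ e, ψ e ∈ L' v)
    (hψproper : ∀ e ∈ H.edgeSet, ∀ f ∈ H.edgeSet, e ≠ f →
      (∃ v : V, v ∈ e ∧ v ∈ f) → ψ e ≠ ψ f)
    (v : V) (e f : Sym2 V) (hf : f ∈ G.edgeSet) (hne : e ≠ f) (hve : v ∈ e) (hvf : v ∈ f)
    (hψ : ψ e = ψ f) : e ∉ H.edgeSet := by
  intro he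
  by_cases hfH : f ∈ H.edgeSet
  · exact hψproper e he f hfH hne ⟨v, hve, hvf⟩ hψ
  · exact (hdisj v).ne_of_mem (hψL' f hf hfH v hvf) (hψR e he v hve) hψ.symm

theorem notMem_edgeSet_of_isCycle_of_color_eq
    (hsep : ∀ (v : V) (e f : Sym2 V), f ∈ G.edgeSet → e ≠ f → v ∈ e → v ∈ f → ψ e = ψ f →
      e ∉ H.edgeSet)
    {a : V} {W : G.Walk a a} (hW : W.IsCycle) {c : ℕ} (hc : ∀ e ∈ W.edges, ψ e = c)
    {e : Sym2 V} (he : e ∈ W.edges) : e ∉ H.edgeSet := by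
  induction e using Sym2.inductionOn with
  | _ x y =>
    obtain ⟨f, hf, hne, hxf⟩ := hW.exists_ne_mem_edges_of_mem he (Sym2.mem_mk_left x y)
    exact hsep x _ f (W.edges_subset_edgeSet hf) hne.symm (Sym2.mem_mk_left x y) hxf
      ((hc _ he).trans (hc f hf).symm)

theorem ncard_colorClass_le_two [Finite V]
    (hsep : ∀ (v : V) (e f : Sym2 V), f ∈ G.edgeSet → e ≠ f → v ∈ e → v ∈ f → ψ e = ψ f →
      e ∉ H.edgeSet)
    (hψG : ∀ e ∈ G.edgeSet, e ∉ H.edgeSet → ψ e = φ e)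
    (hφdeg : ∀ (v : V) (c : ℕ), ({e | e ∈ G.edgeSet ∧ v ∈ e ∧ φ e = c}).ncard ≤ 2)
    (v : V) (c : ℕ) : ({e | e ∈ G.edgeSet ∧ v ∈ e ∧ ψ e = c}).ncard ≤ 2 := by
  rcases Set.subsingleton_or_nontrivial {e | e ∈ G.edgeSet ∧ v ∈ e ∧ ψ e = c} with hS | hS
  · exact ((Set.ncard_le_one_iff).mpr fun ha hb => hS ha hb).trans one_le_two
  · refine le_trans (Set.ncard_le_ncard fun e he => ?_) (hφdeg v c)
    obtain ⟨f, hf, hne⟩ := hS.exists_ne e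
    have heH := hsep v e f hf.1 hne.symm he.2.1 hf.2.1 (he.2.2.trans hf.2.2.symm)
    exact ⟨he.1, he.2.1, (hψG e he.1 heH).symm.trans he.2.2⟩

end CombinedColoring

theorem combine_colorings_linear_general {V : Type*} [Fintype V] (G H : SimpleGraph V)
    (L' R : V → Set ℕ) (φ φ' ψ : Sym2 V → ℕ)
    (hdisj : ∀ v : V, Disjoint (L' v) (R v))
    (hφdeg : ∀ (v : V) (c : ℕ), ({e | e ∈ G.edgeSet ∧ v ∈ e ∧ φ e = c}).ncard ≤ 2)
    (hφlist : ∀ e ∈ G.edgeSet, ∀ v ∈ e, φ e ∈ L' v)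
    (hhit : ∀ (a : V) (W : G.Walk a a), W.IsCycle → (∃ c, ∀ e ∈ W.edges, φ e = c) →
      ∃ e ∈ W.edges, e ∈ H.edgeSet)
    (hφ'proper : ∀ e ∈ H.edgeSet, ∀ f ∈ H.edgeSet, e ≠ f →
      (∃ v : V, v ∈ e ∧ v ∈ f) → φ' e ≠ φ' f)
    (hφ'list : ∀ e ∈ H.edgeSet, ∀ v ∈ e, φ' e ∈ R v)
    (hψH : ∀ e ∈ H.edgeSet, ψ e = φ' e)
    (hψG : ∀ e ∈ G.edgeSet, e ∉ H.edgeSet → ψ e = φ e) :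
    (∀ (a : V) (W : G.Walk a a), W.IsCycle → ¬ ∃ c, ∀ e ∈ W.edges, ψ e = c) ∧
      (∀ (v : V) (c : ℕ), ({e | e ∈ G.edgeSet ∧ v ∈ e ∧ ψ e = c}).ncard ≤ 2) := by
  have hsep := notMem_edgeSet_of_color_eq hdisj
    (fun e he v hv => hψH e he ▸ hφ'list e he v hv)
    (fun e he heH v hv => hψG e he heH ▸ hφlist e he v hv)
    (fun e he f hf hne hv => by rw [hψH e he, hψH f hf]; exact hφ'proper e he f hf hne hv)
  refine ⟨fun a W hW ⟨c, hc⟩ => ?_, ncard_colorClass_le_two hsep hψG hφdeg⟩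
  have hWH := fun e (he : e ∈ W.edges) => notMem_edgeSet_of_isCycle_of_color_eq hsep hW hc he
  obtain ⟨e, he, heH⟩ := hhit a W hW
    ⟨c, fun e he => (hψG e (W.edges_subset_edgeSet he) (hWH e he)).symm.trans (hc e he)⟩
  exact hWH e he heH

/-- Combining a degree-2 coloring `φ` (colored from lists `L'`) with a proper coloring
`φ'` of a subgraph `H` hitting all monochromatic cycles (colored from lists `R`, with
`L'(v)` and `R(v)` disjoint at every vertex) yields a coloring `ψ` whose color classes
are all linear forests. -/
theorem combine_colorings_linear {V : Type*} [Fintype V] (G H : SimpleGraph V)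
    (L' R : V → Set ℕ) (φ φ' ψ : Sym2 V → ℕ)
    (hdisj : ∀ v : V, Disjoint (L' v) (R v))
    (hφdeg : ∀ (v : V) (c : ℕ), ({e | e ∈ G.edgeSet ∧ v ∈ e ∧ φ e = c}).ncard ≤ 2)
    (hφlist : ∀ e ∈ G.edgeSet, ∀ v ∈ e, φ e ∈ L' v)
    (hHG : H ≤ G)
    (hhit : ∀ (a : V) (W : G.Walk a a), W.IsCycle → (∃ c, ∀ e ∈ W.edges, φ e = c) →
      ∃ e ∈ W.edges, e ∈ H.edgeSet)
    (hφ'proper : ∀ e ∈ H.edgeSet, ∀ f ∈ H.edgeSet, e ≠ f →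
      (∃ v : V, v ∈ e ∧ v ∈ f) → φ' e ≠ φ' f)
    (hφ'list : ∀ e ∈ H.edgeSet, ∀ v ∈ e, φ' e ∈ R v)
    (hψH : ∀ e ∈ H.edgeSet, ψ e = φ' e)
    (hψG : ∀ e ∈ G.edgeSet, e ∉ H.edgeSet → ψ e = φ e) :
    (∀ (a : V) (W : G.Walk a a), W.IsCycle → ¬ ∃ c, ∀ e ∈ W.edges, ψ e = c) ∧
      (∀ (v : V) (c : ℕ), ({e | e ∈ G.edgeSet ∧ v ∈ e ∧ ψ e = c}).ncard ≤ 2) :=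
  combine_colorings_linear_general G H L' R φ φ' ψ hdisj hφdeg hφlist hhit hφ'proper hφ'list hψH hψG
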